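/- Let O_K be a discrete valuation ring with fraction field K, uniformizer π and normalized valuation ν. Let F = Σ_{j ≥ 0} a_j x^j ∈ O_K[x] be a nonconstant polynomial whose reduction modulo π is nonzero and which splits over K. Let n ≥ 1 be an integer and let e ≥ 0 be an integer such that ν(a_e) + n·e = min_{0 ≤ j ≤ deg F} (ν(a_j) + n·j). Then ν(disc(F)) ≥ n·e·(e−1). -/

import Mathlib

open Polynomial

/-- The normalized valuation on a DVR with uniformizer `π`: `ν(a)` is the supremum of the
naturals `l` with `π^l ∣ a` (so `ν(0) = ⊤`). -/
noncomputable def nuVal {O_K : Type*} [CommRing O_K] (π : O_K) (a : O_K) : ℕ∞ :=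
  ⨆ l : {l : ℕ // π ^ l ∣ a}, ((l : ℕ) : ℕ∞)

namespace S2Aux
set_option linter.unusedSectionVars false
variable {O_K : Type*} [CommRing O_K] [IsDomain O_K] [IsDiscreteValuationRing O_K]
  {K : Type*} [Field K] [Algebra O_K K] [IsFractionRing O_K K]

def V (π : O_K) (k : ℤ) (x : K) : Prop :=
  ∃ a : O_K, x = (algebraMap O_K K π) ^ k * algebraMap O_K K a

variable {π : O_K}

lemma pK_ne_zero (hπ : Irreducible π) : algebraMap O_K K π ≠ 0 := fun h =>
  hπ.ne_zero (IsFractionRing.injective O_K K (by simpa using h))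

open scoped Classical in
lemma V_zero (k : ℤ) : V π k (0 : K) := ⟨0, by simp⟩

lemma V_algebraMap (a : O_K) : V π 0 (algebraMap O_K K a) := ⟨a, by simp⟩

lemma V_mono {k' k : ℤ} (h : k' ≤ k) {x : K} (hx : V π k x) (hπ : Irreducible π) :
    V π k' x := by
  obtain ⟨a, rfl⟩ := hx
  refine ⟨π ^ (k - k').toNat * a, ?_⟩
  rw [map_mul, map_pow, ← mul_assoc, ← zpow_natCast (algebraMap O_K K π), ← zpow_add₀ (pK_ne_zero hπ)]
  congr 2
  omega

lemma V_mul {k l : ℤ} {x y : K} (hx : V π k x) (hy : V π l y) (hπ : Irreducible π) :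
    V π (k + l) (x * y) := by
  obtain ⟨a, rfl⟩ := hx; obtain ⟨b, rfl⟩ := hy
  exact ⟨a * b, by rw [map_mul, zpow_add₀ (pK_ne_zero hπ)]; ring⟩

lemma V_add {k : ℤ} {x y : K} (hx : V π k x) (hy : V π k y) : V π k (x + y) := by
  obtain ⟨a, rfl⟩ := hx; obtain ⟨b, rfl⟩ := hy
  exact ⟨a + b, by rw [map_add]; ring⟩

lemma V_neg {k : ℤ} {x : K} (hx : V π k x) : V π k (-x) := by
  obtain ⟨a, rfl⟩ := hx; exact ⟨-a, by rw [map_neg]; ring⟩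

lemma V_sub {k : ℤ} {x y : K} (hx : V π k x) (hy : V π k y) : V π k (x - y) := by
  rw [sub_eq_add_neg]; exact V_add hx (V_neg hy)

lemma V_of_add_left {k : ℤ} {x y : K} (hxy : V π k (x + y)) (hy : V π k y) : V π k x := by
  have := V_sub hxy hy; simpa using this

lemma V_pow {k : ℤ} {x : K} (hx : V π k x) (hπ : Irreducible π) (m : ℕ) :
    V π (m * k) (x ^ m) := by
  induction m with
  | zero => simpa using V_algebraMap (π := π) (K := K) 1
  | succ m ih =>
    have h2 : ((m + 1 : ℕ) : ℤ) * k = (m : ℤ) * k + k := by push_cast; ring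
    rw [pow_succ, h2]
    exact V_mul ih hx hπ

lemma V_sum {ι : Type*} {s : Finset ι} {k : ℤ} {h : ι → K}
    (hs : ∀ i ∈ s, V π k (h i)) : V π k (∑ i ∈ s, h i) := by
  classical
  induction s using Finset.cons_induction with
  | empty => simpa using V_zero (π := π) (K := K) k
  | cons i s his ih =>
    rw [Finset.sum_cons]
    exact V_add (hs i (Finset.mem_cons_self i s)) (ih fun j hj => hs j (Finset.mem_cons.2 (Or.inr hj)))

lemma V_prod {ι : Type*} {s : Finset ι} {g : ι → ℤ} {h : ι → K}
    (hs : ∀ i ∈ s, V π (g i) (h i)) (hπ : Irreducible π) :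
    V π (∑ i ∈ s, g i) (∏ i ∈ s, h i) := by
  classical
  induction s using Finset.cons_induction with
  | empty => simpa using V_algebraMap (π := π) (K := K) 1
  | cons i s his ih =>
    rw [Finset.sum_cons, Finset.prod_cons]
    exact V_mul (hs i (Finset.mem_cons_self i s))
      (ih fun j hj => hs j (Finset.mem_cons.2 (Or.inr hj))) hπ


open scoped Classical in
noncomputable def vK (π : O_K) (x : K) : ℤ :=
  if h : ∃ (k : ℤ) (u : O_Kˣ), x = algebraMap O_K K (u : O_K) * (algebraMap O_K K π) ^ k
  then h.choose else 0

lemma exists_rep (hπ : Irreducible π) {x : K} (hx : x ≠ 0) :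
    ∃ (k : ℤ) (u : O_Kˣ), x = algebraMap O_K K (u : O_K) * (algebraMap O_K K π) ^ k := by
  obtain ⟨a, b, hb, rfl⟩ := IsFractionRing.div_surjective (A := O_K) x
  have hb0 : b ≠ 0 := nonZeroDivisors.ne_zero hb
  have ha0 : a ≠ 0 := by rintro rfl; simp at hx
  obtain ⟨m, u, rfl⟩ := IsDiscreteValuationRing.eq_unit_mul_pow_irreducible ha0 hπ
  obtain ⟨l, w, rfl⟩ := IsDiscreteValuationRing.eq_unit_mul_pow_irreducible hb0 hπ
  refine ⟨(m : ℤ) - l, u * w⁻¹, ?_⟩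
  have hbK : algebraMap O_K K ((w : O_K) * π ^ l) ≠ 0 := fun h =>
    hb0 (IsFractionRing.injective O_K K (by simpa using h))
  have hpK := pK_ne_zero (K := K) hπ
  rw [div_eq_iff hbK, map_mul, map_mul, map_pow, map_pow,
    ← zpow_natCast (algebraMap O_K K π) m, ← zpow_natCast (algebraMap O_K K π) l]
  have h1 : algebraMap O_K K (u : O_K) =
      algebraMap O_K K ((u * w⁻¹ : O_Kˣ) : O_K) * algebraMap O_K K (w : O_K) := by
    rw [← map_mul, ← Units.val_mul, inv_mul_cancel_right]
  have h2 : (algebraMap O_K K π) ^ (m : ℤ) =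
      (algebraMap O_K K π) ^ ((m : ℤ) - l) * (algebraMap O_K K π) ^ (l : ℤ) := by
    rw [← zpow_add₀ hpK, sub_add_cancel]
  rw [h1, h2]; ring

lemma vK_spec (hπ : Irreducible π) {x : K} (hx : x ≠ 0) :
    ∃ u : O_Kˣ, x = algebraMap O_K K (u : O_K) * (algebraMap O_K K π) ^ (vK π x) := by
  classical
  have h := exists_rep hπ hx
  rw [vK, dif_pos h]
  exact h.choose_spec

lemma V_of_rep (u : O_Kˣ) (k : ℤ) :
    V π k (algebraMap O_K K (u : O_K) * (algebraMap O_K K π) ^ k) :=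
  ⟨u, (mul_comm _ _)⟩

lemma not_V_succ (hπ : Irreducible π) (u : O_Kˣ) (k : ℤ) :
    ¬ V π (k + 1) (algebraMap O_K K (u : O_K) * (algebraMap O_K K π) ^ k) := by
  rintro ⟨a, ha⟩
  have hpK := pK_ne_zero (K := K) hπ
  have h1 : algebraMap O_K K (u : O_K) = algebraMap O_K K (π * a) := by
    have h2 : (algebraMap O_K K π) ^ (k + 1) = (algebraMap O_K K π) ^ k * algebraMap O_K K π := by
      rw [zpow_add_one₀ hpK]
    rw [h2] at ha
    have h3 : algebraMap O_K K (u : O_K) * (algebraMap O_K K π) ^ k =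
        algebraMap O_K K (π * a) * (algebraMap O_K K π) ^ k := by
      rw [ha, map_mul]; ring
    exact mul_right_cancel₀ (zpow_ne_zero _ hpK) h3
  have h3 : (u : O_K) = π * a := IsFractionRing.injective O_K K h1
  exact hπ.not_isUnit (isUnit_of_dvd_unit ⟨a, h3⟩ u.isUnit)

lemma V_iff (hπ : Irreducible π) {x : K} (hx : x ≠ 0) {k : ℤ} :
    V π k x ↔ k ≤ vK π x := by
  obtain ⟨u, hu⟩ := vK_spec hπ hx
  constructor
  · intro hV
    by_contra hlt
    push_neg at hlt
    have h5 : V π (vK π x + 1) x := V_mono (by omega) hV hπ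
    nth_rewrite 2 [hu] at h5
    exact not_V_succ hπ u _ h5
  · intro hk
    refine V_mono hk ?_ hπ
    nth_rewrite 2 [hu]
    exact V_of_rep u _

lemma vK_eq_of_rep (hπ : Irreducible π) {x : K} (u : O_Kˣ) (k : ℤ)
    (h : x = algebraMap O_K K (u : O_K) * (algebraMap O_K K π) ^ k) : vK π x = k := by
  have hx : x ≠ 0 := by
    rw [h]
    exact mul_ne_zero (fun hh => u.ne_zero (IsFractionRing.injective O_K K (by simpa using hh)))
      (zpow_ne_zero _ (pK_ne_zero hπ))
  have h1 : k ≤ vK π x := (V_iff hπ hx).1 (h ▸ V_of_rep u k)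
  have h2 : vK π x ≤ k := by
    by_contra hlt
    push_neg at hlt
    have h5 : V π (k + 1) x := (V_iff hπ hx).2 (by omega)
    rw [h] at h5
    exact not_V_succ hπ u _ h5
  omega

lemma V_self (hπ : Irreducible π) {x : K} (hx : x ≠ 0) : V π (vK π x) x :=
  (V_iff hπ hx).2 le_rfl

lemma vK_mul (hπ : Irreducible π) {x y : K} (hx : x ≠ 0) (hy : y ≠ 0) :
    vK π (x * y) = vK π x + vK π y := by
  obtain ⟨u, hu⟩ := vK_spec hπ hx
  obtain ⟨w, hw⟩ := vK_spec hπ hy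
  refine vK_eq_of_rep hπ (u * w) _ ?_
  rw [Units.val_mul, map_mul, zpow_add₀ (pK_ne_zero hπ)]
  conv_lhs => rw [hu, hw]
  ring

lemma vK_prod (hπ : Irreducible π) {ι : Type*} {s : Finset ι} {h : ι → K}
    (h0 : ∀ i ∈ s, h i ≠ 0) : vK π (∏ i ∈ s, h i) = ∑ i ∈ s, vK π (h i) := by
  classical
  induction s using Finset.cons_induction with
  | empty => simpa using vK_eq_of_rep hπ 1 0 (by simp)
  | cons i s his ih =>
    rw [Finset.prod_cons, Finset.sum_cons,
      vK_mul hπ (h0 i (Finset.mem_cons_self i s))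
        (Finset.prod_ne_zero_iff.2 fun j hj => h0 j (Finset.mem_cons.2 (Or.inr hj))),
      ih fun j hj => h0 j (Finset.mem_cons.2 (Or.inr hj))]

lemma V_nat_iff (a : O_K) (k : ℕ) :
    V π (k : ℤ) (algebraMap O_K K a) ↔ π ^ k ∣ a := by
  constructor
  · rintro ⟨b, hb⟩
    rw [zpow_natCast, ← map_pow, ← map_mul] at hb
    exact ⟨b, IsFractionRing.injective O_K K hb⟩
  · rintro ⟨b, rfl⟩
    exact ⟨b, by rw [zpow_natCast, ← map_pow, ← map_mul]⟩

lemma le_nuVal {a : O_K} {k : ℕ} (h : π ^ k ∣ a) : (k : ℕ∞) ≤ nuVal π a :=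
  le_iSup (fun l : {l : ℕ // π ^ l ∣ a} => ((l : ℕ) : ℕ∞)) ⟨k, h⟩

lemma nuVal_le {a : O_K} {k : ℕ} (hd : ¬ π ^ (k + 1) ∣ a) : nuVal π a ≤ (k : ℕ∞) := by
  refine iSup_le ?_
  rintro ⟨l, hl⟩
  have : l ≤ k := by
    by_contra hlt
    exact hd (dvd_trans (pow_dvd_pow π (by omega)) hl)
  exact_mod_cast this

lemma nuVal_eq {a : O_K} {k : ℕ} (h1 : π ^ k ∣ a) (h2 : ¬ π ^ (k + 1) ∣ a) :
    nuVal π a = (k : ℕ∞) :=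
  le_antisymm (nuVal_le h2) (le_nuVal h1)

lemma nuVal_ne_top (hπ : Irreducible π) {a : O_K} (ha : a ≠ 0) : nuVal π a ≠ ⊤ := by
  obtain ⟨m, u, rfl⟩ := IsDiscreteValuationRing.eq_unit_mul_pow_irreducible ha hπ
  have hd : ¬ π ^ (m + 1) ∣ (u : O_K) * π ^ m := by
    intro hdvd
    have h2 : π ^ (m + 1) ∣ π ^ m := Units.dvd_mul_left.mp hdvd
    have := (pow_dvd_pow_iff hπ.ne_zero hπ.not_isUnit).1 h2
    omega
  exact ((nuVal_le hd).trans_lt (WithTop.coe_lt_top m)).ne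

lemma nuVal_zero_eq_top : nuVal π (0 : O_K) = ⊤ := by
  by_contra h2
  obtain ⟨m, hm⟩ := WithTop.ne_top_iff_exists.1 h2
  have h3 := le_nuVal (π := π) (a := 0) (k := m + 1) (dvd_zero _)
  rw [← hm] at h3
  exact absurd (Nat.cast_le.mp h3) (by omega)


lemma sum_f_bound {ι : Type*} [DecidableEq ι] (U₀ U : Finset ι) (f : ι → ℤ) (θ : ℤ)
    (hle : ∀ i ∈ U₀, f i ≤ θ - 1) (heq : ∀ i ∉ U₀, f i = θ) :
    ∃ q : ℕ, q ≤ U₀.card ∧ q ≤ U.card ∧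
      (q = U₀.card → q = U.card → U = U₀) ∧
      (∑ i ∈ U₀, f i) + θ * ((U.card : ℤ) - U₀.card) + ((U₀.card : ℤ) - q) ≤ ∑ i ∈ U, f i := by
  refine ⟨(U ∩ U₀).card, Finset.card_le_card (Finset.inter_subset_right),
    Finset.card_le_card (Finset.inter_subset_left), ?_, ?_⟩
  · intro h1 h2
    have e1 : U ∩ U₀ = U₀ :=
      Finset.eq_of_subset_of_card_le Finset.inter_subset_right (le_of_eq h1.symm)
    have e2 : U ∩ U₀ = U :=
      Finset.eq_of_subset_of_card_le Finset.inter_subset_left (le_of_eq h2.symm)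
    rw [← e1, e2]
  · have hU : ∑ i ∈ U, f i = ∑ i ∈ U ∩ U₀, f i + ∑ i ∈ U \ U₀, f i :=
      (Finset.sum_inter_add_sum_sdiff U U₀ f).symm
    have hU0 : ∑ i ∈ U₀, f i = ∑ i ∈ U₀ ∩ U, f i + ∑ i ∈ U₀ \ U, f i :=
      (Finset.sum_inter_add_sum_sdiff U₀ U f).symm
    have hdiffU : ∑ i ∈ U \ U₀, f i = θ * ((U \ U₀).card : ℤ) := by
      rw [Finset.sum_congr rfl fun i hi => heq i (Finset.mem_sdiff.1 hi).2]
      simp [mul_comm]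
    have hdiffU0 : ∑ i ∈ U₀ \ U, f i ≤ (θ - 1) * ((U₀ \ U).card : ℤ) := by
      calc ∑ i ∈ U₀ \ U, f i ≤ ∑ _i ∈ U₀ \ U, (θ - 1) :=
            Finset.sum_le_sum fun i hi => hle i (Finset.mem_sdiff.1 hi).1
        _ = (θ - 1) * ((U₀ \ U).card : ℤ) := by simp [mul_comm]; ring
    have hc1 : (U ∩ U₀).card + (U \ U₀).card = U.card := Finset.card_inter_add_card_sdiff U U₀
    have hc2 : (U₀ ∩ U).card + (U₀ \ U).card = U₀.card := Finset.card_inter_add_card_sdiff U₀ U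
    have hcomm : U₀ ∩ U = U ∩ U₀ := Finset.inter_comm _ _
    have hic : ∑ i ∈ U₀ ∩ U, f i = ∑ i ∈ U ∩ U₀, f i := by rw [hcomm]
    rw [hcomm] at hc2
    have h1 : ((U \ U₀).card : ℤ) = (U.card : ℤ) - (U ∩ U₀).card := by
      omega
    have h2 : ((U₀ \ U).card : ℤ) = (U₀.card : ℤ) - (U ∩ U₀).card := by
      omega
    rw [hU, hU0, hdiffU, hic, h1] at *
    have := hdiffU0
    rw [h2] at this
    nlinarith [this]

lemma coeff_formula (hπ : Irreducible π) {F : Polynomial O_K} {r : Fin F.natDegree → K}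
    (hsplit : F.map (algebraMap O_K K) = C (algebraMap O_K K F.leadingCoeff) *
      ∏ i, (X - C (r i))) (t : ℕ) (ht : t ≤ F.natDegree) :
    algebraMap O_K K (F.coeff (F.natDegree - t)) =
      (-1 : K) ^ t * ∑ U ∈ Finset.powersetCard t (Finset.univ : Finset (Fin F.natDegree)),
        (algebraMap O_K K F.leadingCoeff * ∏ i ∈ U, r i) := by
  classical
  have h1 : algebraMap O_K K (F.coeff (F.natDegree - t)) =
      (F.map (algebraMap O_K K)).coeff (F.natDegree - t) := (Polynomial.coeff_map _ _).symm
  rw [h1, hsplit, Polynomial.coeff_C_mul]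
  have h2 : (∏ i, (X - C (r i))) =
      ((Finset.univ.val.map r).map fun a => X - C a).prod := by
    rw [Finset.prod_eq_multiset_prod, Multiset.map_map]
    rfl
  have hcard : Multiset.card (Finset.univ.val.map r) = F.natDegree := by
    simp
  have h3 := Multiset.prod_X_sub_C_coeff (Finset.univ.val.map r)
    (k := F.natDegree - t) (by rw [hcard]; omega)
  rw [h2, h3, hcard]
  have h4 : F.natDegree - (F.natDegree - t) = t := by omega
  rw [h4, Finset.esymm_map_val, Finset.mul_sum, Finset.mul_sum]
  rw [Finset.mul_sum]
  refine Finset.sum_congr rfl fun U hU => by ring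

lemma key (hπ : Irreducible π) {F : Polynomial O_K} {r : Fin F.natDegree → K} (hF : F ≠ 0)
    (hsplit : F.map (algebraMap O_K K) = C (algebraMap O_K K F.leadingCoeff) *
      ∏ i, (X - C (r i))) (θ : ℤ) [DecidablePred fun i => V π θ (r i)] :
    0 ≤ vK π (algebraMap O_K K F.leadingCoeff) +
        ∑ i ∈ Finset.univ.filter (fun i => ¬ V π θ (r i)), vK π (r i) ∧
    (∀ t : ℕ, t ≤ F.natDegree →
      V π ((vK π (algebraMap O_K K F.leadingCoeff) +
          ∑ i ∈ Finset.univ.filter (fun i => ¬ V π θ (r i)), vK π (r i)) +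
          θ * ((t : ℤ) - (Finset.univ.filter (fun i => ¬ V π θ (r i))).card) +
          max 0 (((Finset.univ.filter (fun i => ¬ V π θ (r i))).card : ℤ) - t))
        (algebraMap O_K K (F.coeff (F.natDegree - t)))) ∧
    ¬ V π ((vK π (algebraMap O_K K F.leadingCoeff) +
        ∑ i ∈ Finset.univ.filter (fun i => ¬ V π θ (r i)), vK π (r i)) + 1)
      (algebraMap O_K K
        (F.coeff (F.natDegree - (Finset.univ.filter (fun i => ¬ V π θ (r i))).card))) := by
  classical
  set cK := algebraMap O_K K F.leadingCoeff with hcKdef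
  have hcK : cK ≠ 0 := fun h => (Polynomial.leadingCoeff_ne_zero.2 hF)
    (IsFractionRing.injective O_K K (by rw [map_zero]; exact h))
  set U₀ : Finset (Fin F.natDegree) := Finset.univ.filter (fun i => ¬ V π θ (r i)) with hU₀
  set γ := vK π cK with hγ
  set s := U₀.card with hs
  have hr0 : ∀ i ∈ U₀, r i ≠ 0 := by
    intro i hi h0
    have : ¬ V π θ (r i) := (Finset.mem_filter.1 hi).2
    exact this (h0 ▸ V_zero θ)
  set f : Fin F.natDegree → ℤ := fun i => if V π θ (r i) then θ else vK π (r i) with hf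
  have hfV : ∀ i, V π (f i) (r i) := by
    intro i
    by_cases h : V π θ (r i)
    · simpa [hf, h] using h
    · have hne : r i ≠ 0 := fun h0 => h (h0 ▸ V_zero θ)
      simpa [hf, h] using V_self hπ hne
  have hfle : ∀ i ∈ U₀, f i ≤ θ - 1 := by
    intro i hi
    have hmem : ¬ V π θ (r i) := (Finset.mem_filter.1 hi).2
    have hne : r i ≠ 0 := hr0 i hi
    have : ¬ θ ≤ vK π (r i) := fun hle => hmem ((V_iff hπ hne).2 hle)
    simp only [hf, if_neg hmem]
    omega
  have hfeq : ∀ i ∉ U₀, f i = θ := by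
    intro i hi
    have : V π θ (r i) := by
      by_contra h
      exact hi (Finset.mem_filter.2 ⟨Finset.mem_univ i, h⟩)
    simp [hf, this]
  have hsum0 : ∑ i ∈ U₀, f i = ∑ i ∈ U₀, vK π (r i) :=
    Finset.sum_congr rfl fun i hi => by simp [hf, (Finset.mem_filter.1 hi).2]
  set k₀ : ℤ := γ + ∑ i ∈ U₀, vK π (r i) with hk₀
  -- per-term V bound
  have hterm : ∀ U : Finset (Fin F.natDegree), V π (γ + ∑ i ∈ U, f i) (cK * ∏ i ∈ U, r i) := by
    intro U
    exact V_mul (V_self hπ hcK) (V_prod (fun i _ => hfV i) hπ) hπ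
  -- C3
  have hC3 : ∀ t : ℕ, t ≤ F.natDegree →
      V π (k₀ + θ * ((t : ℤ) - s) + max 0 ((s : ℤ) - t))
        (algebraMap O_K K (F.coeff (F.natDegree - t))) := by
    intro t ht
    rw [coeff_formula hπ hsplit t ht]
    have hsumV : V π (k₀ + θ * ((t : ℤ) - s) + max 0 ((s : ℤ) - t))
        (∑ U ∈ Finset.powersetCard t (Finset.univ : Finset (Fin F.natDegree)),
          (cK * ∏ i ∈ U, r i)) := by
      refine V_sum fun U hU => ?_
      obtain ⟨q, hq1, hq2, _, hq4⟩ := sum_f_bound U₀ U f θ hfle hfeq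
      have hUcard : U.card = t := (Finset.mem_powersetCard.1 hU).2
      rw [hsum0, hUcard, ← hs] at hq4
      rw [← hs] at hq1
      rw [hUcard] at hq2
      refine V_mono ?_ (hterm U) hπ
      have hmax : max 0 ((s : ℤ) - t) ≤ (s : ℤ) - q := by
        rcases le_or_gt ((s : ℤ) - t) 0 with h | h
        · rw [max_eq_left h]; omega
        · rw [max_eq_right h.le]; omega
      rw [hk₀]
      linarith
    have hsign : V π 0 ((-1 : K) ^ t) := by
      have : ((-1 : K) ^ t) = algebraMap O_K K ((-1) ^ t) := by
        rw [map_pow, map_neg, map_one]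
      rw [this]
      exact V_algebraMap _
    have := V_mul hsign hsumV hπ
    simpa using this
  have hsle : s ≤ F.natDegree := by
    rw [hs]
    calc U₀.card ≤ (Finset.univ : Finset (Fin F.natDegree)).card :=
          Finset.card_le_card (Finset.subset_univ _)
      _ = F.natDegree := by simp
  have hC1 : ¬ V π (k₀ + 1) (algebraMap O_K K (F.coeff (F.natDegree - s))) := by
    rw [coeff_formula hπ hsplit s hsle]
    have hU₀mem : U₀ ∈ Finset.powersetCard s Finset.univ :=
      Finset.mem_powersetCard.2 ⟨Finset.subset_univ _, hs.symm⟩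
    have hsplit2 : ∑ U ∈ Finset.powersetCard s Finset.univ, (cK * ∏ i ∈ U, r i) =
        (cK * ∏ i ∈ U₀, r i) +
        ∑ U ∈ (Finset.powersetCard s Finset.univ).erase U₀, (cK * ∏ i ∈ U, r i) :=
      (Finset.add_sum_erase _ _ hU₀mem).symm
    have hrest : V π (k₀ + 1)
        (∑ U ∈ (Finset.powersetCard s Finset.univ).erase U₀, (cK * ∏ i ∈ U, r i)) := by
      refine V_sum fun U hU => ?_
      have hUne : U ≠ U₀ := (Finset.mem_erase.1 hU).1
      have hUmem := (Finset.mem_erase.1 hU).2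
      have hUcard : U.card = s := (Finset.mem_powersetCard.1 hUmem).2
      obtain ⟨q, hq1, hq2, hq3, hq4⟩ := sum_f_bound U₀ U f θ hfle hfeq
      rw [hsum0, hUcard, ← hs] at hq4
      rw [← hs] at hq1
      rw [hUcard] at hq2
      have hqne : q ≠ s := by
        intro h
        exact hUne (hq3 (by rw [h, hs]) (by rw [h, hUcard]))
      refine V_mono ?_ (hterm U) hπ
      rw [hk₀]
      have h1 : (q : ℤ) ≤ (s : ℤ) - 1 := by
        have : q < s := lt_of_le_of_ne hq2 hqne
        omega
      linarith
    have hmain : ¬ V π (k₀ + 1) (cK * ∏ i ∈ U₀, r i) := by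
      have hprodne : (∏ i ∈ U₀, r i) ≠ 0 := Finset.prod_ne_zero_iff.2 hr0
      have hne : cK * ∏ i ∈ U₀, r i ≠ 0 := mul_ne_zero hcK hprodne
      have hv : vK π (cK * ∏ i ∈ U₀, r i) = k₀ := by
        rw [vK_mul hπ hcK hprodne, vK_prod hπ hr0, hk₀, hγ]
      intro hV
      have hle2 := (V_iff hπ hne).1 hV
      rw [hv] at hle2
      omega
    intro hV
    have hsign : V π 0 ((-1 : K) ^ s) := by
      have h9 : ((-1 : K) ^ s) = algebraMap O_K K ((-1) ^ s) := by
        rw [map_pow, map_neg, map_one]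
      rw [h9]
      exact V_algebraMap _
    have htot : V π (k₀ + 1)
        (∑ U ∈ Finset.powersetCard s Finset.univ, (cK * ∏ i ∈ U, r i)) := by
      have h10 := V_mul hsign hV hπ
      have h11 : ((-1 : K) ^ s) * ((-1 : K) ^ s *
          ∑ U ∈ Finset.powersetCard s Finset.univ, (cK * ∏ i ∈ U, r i)) =
          ∑ U ∈ Finset.powersetCard s Finset.univ, (cK * ∏ i ∈ U, r i) := by
        rw [← mul_assoc, ← pow_add, Even.neg_one_pow ⟨s, rfl⟩, one_mul]
      rw [h11] at h10
      simpa using h10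
    rw [hsplit2] at htot
    exact hmain (V_of_add_left htot hrest)
  have hC2 : 0 ≤ k₀ := by
    by_contra hneg
    push_neg at hneg
    exact hC1 (V_mono (by omega) (V_algebraMap _) hπ)
  exact ⟨hC2, hC3, hC1⟩

lemma pair_sum_swap {D : ℕ} (w : Fin D → Fin D → ℤ) (hsym : ∀ i j, w i j = w j i) :
    2 * (∑ i, ∑ j ∈ Finset.univ.filter (fun j => i < j), w i j) =
      ∑ i, ∑ j ∈ Finset.univ.erase i, w i j := by
  have hsplit : ∀ i : Fin D, ∑ j ∈ Finset.univ.erase i, w i j =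
      (∑ j ∈ Finset.univ.filter (fun j => i < j), w i j) +
      ∑ j ∈ Finset.univ.filter (fun j => j < i), w i j := by
    intro i
    rw [← Finset.sum_filter_add_sum_filter_not (Finset.univ.erase i) (fun j => i < j) (w i)]
    congr 1
    · apply Finset.sum_congr _ (fun _ _ => rfl)
      ext j
      simp only [Finset.mem_filter, Finset.mem_erase, Finset.mem_univ, true_and, and_true]
      constructor
      · rintro ⟨h1, h2⟩; exact h2
      · intro h; exact ⟨ne_of_gt h, h⟩
    · apply Finset.sum_congr _ (fun _ _ => rfl)
      ext j
      simp only [Finset.mem_filter, Finset.mem_erase, Finset.mem_univ, true_and, and_true]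
      constructor
      · rintro ⟨h1, h2⟩
        rcases lt_or_gt_of_ne h1 with h | h
        · exact h
        · exact absurd h h2
      · intro h; exact ⟨ne_of_lt h, not_lt_of_gt h⟩
  have hswap2 : (∑ i : Fin D, ∑ j ∈ Finset.univ.filter (fun j => j < i), w i j) =
      ∑ i : Fin D, ∑ j ∈ Finset.univ.filter (fun j => i < j), w i j := by
    rw [Finset.sum_comm' (s := (Finset.univ : Finset (Fin D)))
      (t := fun i => Finset.univ.filter (fun j => j < i))
      (t' := (Finset.univ : Finset (Fin D)))
      (s' := fun j => Finset.univ.filter (fun i => j < i))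
      (fun x y => by simp)]
    exact Finset.sum_congr rfl fun j _ => Finset.sum_congr rfl fun i _ => hsym i j
  calc 2 * (∑ i : Fin D, ∑ j ∈ Finset.univ.filter (fun j => i < j), w i j)
      = (∑ i : Fin D, ∑ j ∈ Finset.univ.filter (fun j => i < j), w i j) +
        ∑ i : Fin D, ∑ j ∈ Finset.univ.filter (fun j => j < i), w i j := by
        rw [hswap2]; ring
    _ = ∑ i : Fin D, ((∑ j ∈ Finset.univ.filter (fun j => i < j), w i j) +
        ∑ j ∈ Finset.univ.filter (fun j => j < i), w i j) := by
        rw [Finset.sum_add_distrib]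
    _ = ∑ i : Fin D, ∑ j ∈ Finset.univ.erase i, w i j :=
        Finset.sum_congr rfl fun i _ => (hsplit i).symm

end S2Aux

/-- The discriminant of a split polynomial of degree `D`, with leading coefficient `c` and
roots `r 0, …, r (D-1)` listed with multiplicity:
`disc = c^(2D−2) ∏_{i<j} (r i − r j)²`. -/
noncomputable def discOfRoots {K : Type*} [Field K] (D : ℕ) (c : K) (r : Fin D → K) : K :=
  c ^ (2 * D - 2) *
    ∏ i : Fin D, ∏ j ∈ Finset.univ.filter (fun j => i < j), (r i - r j) ^ 2

set_option maxHeartbeats 2000000 in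
open S2Aux in
/-- Let `O_K` be a DVR with fraction field `K`, uniformizer `π` and normalized
valuation `ν`. Let `F = Σ a_j x^j ∈ O_K[x]` be nonconstant, with nonzero reduction mod `π`,
splitting over `K`. If `n ≥ 1` and `e ≥ 0` satisfy
`ν(a_e) + n·e = min_{0 ≤ j ≤ deg F} (ν(a_j) + n·j)`, then `ν(disc F) ≥ n·e·(e−1)`. -/
theorem statement2 (O_K : Type*) [CommRing O_K] [IsDomain O_K] [IsDiscreteValuationRing O_K]
    (K : Type*) [Field K] [Algebra O_K K] [IsFractionRing O_K K]
    (π : O_K) (hπ : Irreducible π)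
    (F : Polynomial O_K) (hF0 : 0 < F.natDegree)
    (hFred : ∃ j : ℕ, ¬ π ∣ F.coeff j)
    (r : Fin F.natDegree → K)
    (hsplit : F.map (algebraMap O_K K) =
      Polynomial.C (algebraMap O_K K F.leadingCoeff) *
        ∏ i : Fin F.natDegree, (Polynomial.X - Polynomial.C (r i)))
    (n : ℕ) (hn : 1 ≤ n) (e : ℕ)
    (he_min : ∀ j : ℕ, j ≤ F.natDegree →
      nuVal π (F.coeff e) + ((n * e : ℕ) : ℕ∞) ≤ nuVal π (F.coeff j) + ((n * j : ℕ) : ℕ∞))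
    (he_attained : ∃ j₀ : ℕ, j₀ ≤ F.natDegree ∧
      nuVal π (F.coeff e) + ((n * e : ℕ) : ℕ∞) =
        nuVal π (F.coeff j₀) + ((n * j₀ : ℕ) : ℕ∞)) :
    ∃ w : O_K,
      discOfRoots F.natDegree (algebraMap O_K K F.leadingCoeff) r =
        algebraMap O_K K (π ^ (n * e * (e - 1)) * w) := by
  classical
  have hF : F ≠ 0 := fun h => by simp [h] at hF0
  have hcO : F.leadingCoeff ≠ 0 := Polynomial.leadingCoeff_ne_zero.2 hF
  have hcK : algebraMap O_K K F.leadingCoeff ≠ 0 := fun h =>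
    hcO (IsFractionRing.injective O_K K (by rw [map_zero]; exact h))
  -- Step 0 : e ≤ natDegree
  have he_le : e ≤ F.natDegree := by
    by_contra hgt
    push_neg at hgt
    have hce : F.coeff e = 0 := Polynomial.coeff_eq_zero_of_natDegree_lt hgt
    have h1 := he_min F.natDegree le_rfl
    rw [hce, nuVal_zero_eq_top, top_add] at h1
    have h2 := top_le_iff.1 h1
    have h3 : nuVal π (F.coeff F.natDegree) = ⊤ := by
      rcases WithTop.add_eq_top.1 h2 with h | h
      · exact h
      · exact absurd h (WithTop.natCast_ne_top _)
    have h4 : F.coeff F.natDegree ≠ 0 := by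
      rw [Polynomial.coeff_natDegree]; exact hcO
    exact nuVal_ne_top hπ h4 h3
  -- Step 1 : apply key with θ = n
  obtain ⟨hk0n, hC3n, hC1n⟩ := key hπ hF hsplit (n : ℤ)
  set Un : Finset (Fin F.natDegree) :=
    Finset.univ.filter (fun i => ¬ V π (n : ℤ) (r i)) with hUn
  set k0n : ℤ := vK π (algebraMap O_K K F.leadingCoeff) + ∑ i ∈ Un, vK π (r i) with hk0ndef
  have hsnD : Un.card ≤ F.natDegree :=
    le_trans (Finset.card_le_card (Finset.subset_univ _)) (by simp)
  have hVexact : V π k0n (algebraMap O_K K (F.coeff (F.natDegree - Un.card))) := by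
    have h0 := hC3n Un.card hsnD
    have heq : k0n + (n : ℤ) * ((Un.card : ℤ) - (Un.card : ℤ)) +
        max 0 ((Un.card : ℤ) - (Un.card : ℤ)) = k0n := by
      norm_num
    rwa [heq] at h0
  have hdvd1 : π ^ k0n.toNat ∣ F.coeff (F.natDegree - Un.card) := by
    refine (V_nat_iff (π := π) (K := K) _ _).1 ?_
    rwa [Int.toNat_of_nonneg hk0n]
  have hndvd1 : ¬ π ^ (k0n.toNat + 1) ∣ F.coeff (F.natDegree - Un.card) := by
    intro hd
    have h5 := (V_nat_iff (π := π) (K := K) _ _).2 hd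
    have hcast : ((k0n.toNat + 1 : ℕ) : ℤ) = k0n + 1 := by
      rw [Nat.cast_add, Int.toNat_of_nonneg hk0n]; rfl
    rw [hcast] at h5
    exact hC1n h5
  have hnuval : nuVal π (F.coeff (F.natDegree - Un.card)) = (k0n.toNat : ℕ∞) :=
    nuVal_eq hdvd1 hndvd1
  have hScard : e + Un.card ≤ F.natDegree := by
    by_contra hlt
    push_neg at hlt
    set t : ℕ := F.natDegree - e with ht
    have hde : t < Un.card := by omega
    have hmin := he_min (F.natDegree - Un.card) (by omega)
    rw [hnuval] at hmin
    have hz := hC3n t (by omega)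
    set z : ℤ := k0n + (n : ℤ) * ((t : ℤ) - (Un.card : ℤ)) +
      max 0 ((Un.card : ℤ) - (t : ℤ)) with hzdef
    have hmaxeq : max 0 ((Un.card : ℤ) - (t : ℤ)) = (Un.card : ℤ) - (t : ℤ) :=
      max_eq_right (by omega)
    have htz : (t : ℤ) = (F.natDegree : ℤ) - (e : ℤ) := by omega
    have hzsum : z + (n : ℤ) * (e : ℤ) =
        k0n + (n : ℤ) * ((F.natDegree : ℤ) - (Un.card : ℤ)) + ((Un.card : ℤ) - (t : ℤ)) := by
      rw [hzdef, hmaxeq, htz]; ring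
    have hδ : (1 : ℤ) ≤ (Un.card : ℤ) - (t : ℤ) := by omega
    have hBz : ((n * (F.natDegree - Un.card) : ℕ) : ℤ) =
        (n : ℤ) * ((F.natDegree : ℤ) - (Un.card : ℤ)) := by
      push_cast [Nat.cast_sub hsnD]; ring
    rcases le_or_gt z 0 with hz0 | hz0
    · have hge : ((n * e : ℕ) : ℕ∞) ≤ (k0n.toNat : ℕ∞) +
          ((n * (F.natDegree - Un.card) : ℕ) : ℕ∞) :=
        le_trans le_add_self hmin
      have hge2 : ((n * e : ℕ) : ℕ∞) ≤
          ((k0n.toNat + n * (F.natDegree - Un.card) : ℕ) : ℕ∞) := by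
        push_cast
        exact hge
      have hge3 : n * e ≤ k0n.toNat + n * (F.natDegree - Un.card) := Nat.cast_le.mp hge2
      have hge4 : ((n * e : ℕ) : ℤ) ≤ ((k0n.toNat + n * (F.natDegree - Un.card) : ℕ) : ℤ) := by
        exact_mod_cast hge3
      rw [Nat.cast_add, hBz, Int.toNat_of_nonneg hk0n] at hge4
      have hA : ((n * e : ℕ) : ℤ) = (n : ℤ) * (e : ℤ) := by push_cast; ring
      rw [hA] at hge4
      linarith
    · have hte : F.natDegree - t = e := by omega
      rw [hte] at hz
      have hdvd2 : π ^ z.toNat ∣ F.coeff e := by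
        refine (V_nat_iff (π := π) (K := K) _ _).1 ?_
        rwa [Int.toNat_of_nonneg hz0.le]
      have hge : ((z.toNat : ℕ) : ℕ∞) + ((n * e : ℕ) : ℕ∞) ≤
          (k0n.toNat : ℕ∞) + ((n * (F.natDegree - Un.card) : ℕ) : ℕ∞) :=
        le_trans (add_le_add_left (le_nuVal hdvd2) _) hmin
      have hge2 : ((z.toNat + n * e : ℕ) : ℕ∞) ≤
          ((k0n.toNat + n * (F.natDegree - Un.card) : ℕ) : ℕ∞) := by
        push_cast
        exact hge
      have hge3 := Nat.cast_le.mp hge2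
      have hge4 : ((z.toNat + n * e : ℕ) : ℤ) ≤
          ((k0n.toNat + n * (F.natDegree - Un.card) : ℕ) : ℤ) := by
        exact_mod_cast hge3
      rw [Nat.cast_add, Nat.cast_add, hBz, Int.toNat_of_nonneg hk0n,
        Int.toNat_of_nonneg hz0.le] at hge4
      have hA : ((n * e : ℕ) : ℤ) = (n : ℤ) * (e : ℤ) := by push_cast; ring
      rw [hA] at hge4
      linarith
  -- Step 2
  obtain ⟨hk00, -, -⟩ := key hπ hF hsplit (0 : ℤ)
  set U0 : Finset (Fin F.natDegree) :=
    Finset.univ.filter (fun i => ¬ V π (0 : ℤ) (r i)) with hU0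
  set S : Finset (Fin F.natDegree) :=
    Finset.univ.filter (fun i => V π (n : ℤ) (r i)) with hSdef
  have hSUn : S.card + Un.card = F.natDegree := by
    have h6 := Finset.card_filter_add_card_filter_not
      (s := (Finset.univ : Finset (Fin F.natDegree)))
      (p := fun i => V π (n : ℤ) (r i))
    simpa using h6
  have heS : e ≤ S.card := by omega
  set γ : ℤ := vK π (algebraMap O_K K F.leadingCoeff) with hγdef
  set g : Fin F.natDegree → ℤ :=
    fun i => if V π (0 : ℤ) (r i) then 0 else vK π (r i) with hg
  have hgV : ∀ i, V π (g i) (r i) := by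
    intro i
    by_cases h : V π (0 : ℤ) (r i)
    · simpa [hg, h] using h
    · have hne : r i ≠ 0 := fun h0 => h (h0 ▸ V_zero 0)
      simpa [hg, h] using V_self hπ hne
  have hgnp : ∀ i, g i ≤ 0 := by
    intro i
    by_cases h : V π (0 : ℤ) (r i)
    · simp [hg, h]
    · have hne : r i ≠ 0 := fun h0 => h (h0 ▸ V_zero 0)
      have h7 : ¬ (0 : ℤ) ≤ vK π (r i) := fun hle => h ((V_iff hπ hne).2 hle)
      simp only [hg, if_neg h]
      omega
  have hgS : ∀ i ∈ S, g i = 0 := by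
    intro i hi
    have hv : V π (n : ℤ) (r i) := (Finset.mem_filter.1 hi).2
    have h8 : V π (0 : ℤ) (r i) := V_mono (Int.natCast_nonneg n) hv hπ
    simp [hg, h8]
  have hSg : 0 ≤ γ + ∑ i, g i := by
    have hsplitg : ∑ i, g i = ∑ i ∈ U0, vK π (r i) := by
      rw [← Finset.sum_filter_add_sum_filter_not Finset.univ
        (fun i => V π (0 : ℤ) (r i)) g]
      have h1 : ∑ i ∈ Finset.univ.filter (fun i => V π (0 : ℤ) (r i)), g i = 0 :=
        Finset.sum_eq_zero fun i hi => by simp [hg, (Finset.mem_filter.1 hi).2]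
      have h2 : ∑ i ∈ U0, g i = ∑ i ∈ U0, vK π (r i) :=
        Finset.sum_congr rfl fun i hi => by simp [hg, (Finset.mem_filter.1 hi).2]
      rw [h1, h2, zero_add]
    rw [hsplitg]
    exact hk00
  set w : Fin F.natDegree → Fin F.natDegree → ℤ :=
    fun i j => if i ∈ S ∧ j ∈ S then 2 * (n : ℤ) else 2 * (g i + g j) with hw
  have hwV : ∀ i j, V π (w i j) ((r i - r j) ^ 2) := by
    intro i j
    by_cases h : i ∈ S ∧ j ∈ S
    · have h1 : V π (n : ℤ) (r i) := (Finset.mem_filter.1 h.1).2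
      have h2 : V π (n : ℤ) (r j) := (Finset.mem_filter.1 h.2).2
      have h3 := V_pow (V_sub h1 h2) hπ 2
      have h4 : ((2 : ℕ) : ℤ) * (n : ℤ) = 2 * (n : ℤ) := by norm_num
      rw [h4] at h3
      simpa [hw, h] using h3
    · have h1 : V π (g i + g j) (r i - r j) :=
        V_sub (V_mono (by linarith [hgnp j]) (hgV i) hπ)
          (V_mono (by linarith [hgnp i]) (hgV j) hπ)
      have h3 := V_pow h1 hπ 2
      have h4 : ((2 : ℕ) : ℤ) * (g i + g j) = 2 * (g i + g j) := by norm_num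
      rw [h4] at h3
      simpa [hw, h] using h3
  have hwsym : ∀ i j, w i j = w j i := by
    intro i j
    by_cases h : i ∈ S ∧ j ∈ S
    · have h9 : j ∈ S ∧ i ∈ S := ⟨h.2, h.1⟩
      simp [hw, h, h9]
    · have h9 : ¬ (j ∈ S ∧ i ∈ S) := fun hh => h ⟨hh.2, hh.1⟩
      simp only [hw, if_neg h, if_neg h9]
      ring
  have hwdec : ∀ i j, w i j =
      (if i ∈ S ∧ j ∈ S then 2 * (n : ℤ) else 0) + 2 * (g i + g j) := by
    intro i j
    by_cases h : i ∈ S ∧ j ∈ S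
    · simp [hw, h, hgS i h.1, hgS j h.2]
    · simp [hw, h]
  set L : ℤ := ∑ i, ∑ j ∈ Finset.univ.filter (fun j => i < j), w i j with hL
  have hswap : 2 * L = ∑ i, ∑ j ∈ Finset.univ.erase i, w i j := pair_sum_swap w hwsym
  have hind : ∑ i, ∑ j ∈ Finset.univ.erase i,
      (if i ∈ S ∧ j ∈ S then 2 * (n : ℤ) else 0) =
      2 * (n : ℤ) * (S.card : ℤ) * ((S.card : ℤ) - 1) := by
    have hinner : ∀ i, ∑ j ∈ Finset.univ.erase i,
        (if i ∈ S ∧ j ∈ S then 2 * (n : ℤ) else 0) =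
        if i ∈ S then 2 * (n : ℤ) * ((S.card : ℤ) - 1) else 0 := by
      intro i
      by_cases hi : i ∈ S
      · rw [if_pos hi]
        have hcong : ∀ j ∈ Finset.univ.erase i,
            (if i ∈ S ∧ j ∈ S then 2 * (n : ℤ) else 0) =
            (if j ∈ S then 2 * (n : ℤ) else 0) := by
          intro j _
          by_cases hj : j ∈ S <;> simp [hi, hj]
        rw [Finset.sum_congr rfl hcong, Finset.sum_ite_mem]
        have hint : (Finset.univ.erase i) ∩ S = S.erase i := by
          ext j
          simp only [Finset.mem_inter, Finset.mem_erase, Finset.mem_univ, true_and]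
          tauto
        rw [hint, Finset.sum_const, Finset.card_erase_of_mem hi]
        have hge1 : 1 ≤ S.card := Finset.card_pos.2 ⟨i, hi⟩
        have : ((S.card - 1 : ℕ) : ℤ) = (S.card : ℤ) - 1 := by omega
        rw [nsmul_eq_mul, this]
        ring
      · rw [if_neg hi]
        exact Finset.sum_eq_zero fun j _ => by simp [hi]
    rw [Finset.sum_congr rfl fun i _ => hinner i, Finset.sum_ite_mem,
      Finset.univ_inter, Finset.sum_const, nsmul_eq_mul]
    ring
  have hgsum : ∑ i, ∑ j ∈ Finset.univ.erase i, (2 * (g i + g j)) =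
      (4 * (F.natDegree : ℤ) - 4) * (∑ i, g i) := by
    have hinner : ∀ i : Fin F.natDegree, ∑ j ∈ Finset.univ.erase i, (2 * (g i + g j)) =
        2 * (((F.natDegree : ℤ) - 1) * g i + ((∑ k, g k) - g i)) := by
      intro i
      rw [← Finset.mul_sum, Finset.sum_add_distrib, Finset.sum_const,
        Finset.card_erase_of_mem (Finset.mem_univ i)]
      have h1 : ∑ j ∈ Finset.univ.erase i, g j = (∑ k, g k) - g i := by
        have := Finset.sum_erase_add Finset.univ g (Finset.mem_univ i)
        omega
      rw [h1, nsmul_eq_mul]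
      have h2 : (((Finset.univ : Finset (Fin F.natDegree)).card - 1 : ℕ) : ℤ) = (F.natDegree : ℤ) - 1 := by
        simp only [Finset.card_univ, Fintype.card_fin]
        omega
      rw [h2]
    rw [Finset.sum_congr rfl fun i _ => hinner i]
    have h3 : ∑ i : Fin F.natDegree,
        2 * (((F.natDegree : ℤ) - 1) * g i + ((∑ k, g k) - g i)) =
        ∑ i : Fin F.natDegree, ((2 * (F.natDegree : ℤ) - 4) * g i + 2 * (∑ k, g k)) :=
      Finset.sum_congr rfl fun i _ => by ring
    rw [h3, Finset.sum_add_distrib, ← Finset.mul_sum, Finset.sum_const,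
      Finset.card_univ, Fintype.card_fin, nsmul_eq_mul]
    ring
  have hVdisc : V π (((2 * F.natDegree - 2 : ℕ) : ℤ) * γ + L)
      (discOfRoots F.natDegree (algebraMap O_K K F.leadingCoeff) r) := by
    rw [discOfRoots]
    exact V_mul (V_pow (V_self hπ hcK) hπ _)
      (V_prod (fun i _ => V_prod (fun j _ => hwV i j) hπ) hπ) hπ
  have h2L : 2 * L = 2 * (n : ℤ) * (S.card : ℤ) * ((S.card : ℤ) - 1) +
      (4 * (F.natDegree : ℤ) - 4) * (∑ i, g i) := by
    rw [hswap]
    rw [Finset.sum_congr rfl fun i (_ : i ∈ Finset.univ) =>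
      Finset.sum_congr rfl fun j (_ : j ∈ Finset.univ.erase i) => hwdec i j]
    rw [Finset.sum_congr rfl fun i (_ : i ∈ Finset.univ) =>
      (Finset.sum_add_distrib (s := Finset.univ.erase i)
        (f := fun j => if i ∈ S ∧ j ∈ S then 2 * (n : ℤ) else 0)
        (g := fun j => 2 * (g i + g j)))]
    rw [Finset.sum_add_distrib, hind, hgsum]
  have hbound : ((n * e * (e - 1) : ℕ) : ℤ) ≤ ((2 * F.natDegree - 2 : ℕ) : ℤ) * γ + L := by
    have hcast : ((2 * F.natDegree - 2 : ℕ) : ℤ) = 2 * (F.natDegree : ℤ) - 2 := by omega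
    have hSc : (e : ℤ) ≤ (S.card : ℤ) := by exact_mod_cast heS
    have hNle2 : ((n * e * (e - 1) : ℕ) : ℤ) ≤ (n : ℤ) * (S.card : ℤ) * ((S.card : ℤ) - 1) := by
      rcases Nat.eq_zero_or_pos e with he0 | hepos
      · subst he0
        simp only [Nat.mul_zero, Nat.zero_mul, Nat.cast_zero]
        have h0S : (0 : ℤ) ≤ (S.card : ℤ) := Int.natCast_nonneg _
        have h0n : (0 : ℤ) ≤ (n : ℤ) := Int.natCast_nonneg _
        have h0S2 : (0 : ℤ) ≤ (S.card : ℤ) * ((S.card : ℤ) - 1) := by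
          rcases Nat.eq_zero_or_pos S.card with h0 | h0
          · simp [h0]
          · have h1S : (1 : ℤ) ≤ (S.card : ℤ) := by exact_mod_cast h0
            nlinarith
        nlinarith [mul_nonneg h0n h0S2]
      · have h1e : (1 : ℤ) ≤ (e : ℤ) := by exact_mod_cast hepos
        have hcast2 : ((n * e * (e - 1) : ℕ) : ℤ) = (n : ℤ) * (e : ℤ) * ((e : ℤ) - 1) := by
          push_cast [Nat.cast_sub hepos]
          ring
        rw [hcast2]
        have h0n : (0 : ℤ) ≤ (n : ℤ) := Int.natCast_nonneg _
        have hq : (e : ℤ) * ((e : ℤ) - 1) ≤ (S.card : ℤ) * ((S.card : ℤ) - 1) := by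
          nlinarith [mul_nonneg (sub_nonneg.2 hSc)
            (show (0 : ℤ) ≤ (S.card : ℤ) + (e : ℤ) - 1 by linarith)]
        nlinarith [mul_le_mul_of_nonneg_left hq h0n]
    have hX : 0 ≤ (4 * (F.natDegree : ℤ) - 4) * (γ + ∑ i, g i) := by
      have hD1 : (1 : ℕ) ≤ F.natDegree := hF0
      have : (0 : ℤ) ≤ 4 * (F.natDegree : ℤ) - 4 := by omega
      exact mul_nonneg this hSg
    rw [hcast]
    nlinarith [h2L, hNle2, hX]
  obtain ⟨wit, hwit⟩ := V_mono hbound hVdisc hπ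
  refine ⟨wit, ?_⟩
  rw [hwit, zpow_natCast, map_mul, map_pow]
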